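/- arXiv:1608.00740 — 2 statements merged into one kernel-verified Lean document; each statement's English description precedes it below -/
import Mathlib

section
/- Under the identification of [L,L]/[[L,L],[L,L]] with the polynomial module ℚ[U,V] sending ad(a)^k ad(b)^l([a,b]) to U^k V^l, the derivation ε_0 of the free Lie algebra L = Lie(a,b) determined by ε_0(a) = -b and ε_0([a,b]) = 0 induces on ℚ[U,V] the derivation -V ∂/∂U. -/
noncomputable section

/-- The free Lie algebra over ℚ on two generators. -/
abbrev L : Type := FreeLieAlgebra ℚ Bool

/-- The generator `a`. -/
def ga : L := FreeLieAlgebra.of ℚ true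
/-- The generator `b`. -/
def gb : L := FreeLieAlgebra.of ℚ false

/-- `D¹L = [L, L]`, the commutator ideal. -/
def D1 : LieIdeal ℚ L := ⁅(⊤ : LieIdeal ℚ L), (⊤ : LieIdeal ℚ L)⁆
/-- `D²L = [[L,L],[L,L]]`, the double commutator. -/
def D2 : LieIdeal ℚ L := ⁅D1, D1⁆

/-- Iterated adjoint action: `adp x k y = ad(x)^k (y)`. -/
def adp (x : L) (k : ℕ) (y : L) : L := ((LieAlgebra.ad ℚ L x) ^ k) y

/-! Since `ε b = 0`, `ε` commutes with `ad b`, so it kills every `ad(b)^l [a,b]`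
(`ε [a,b] = [-b,b] = 0`). Since `ε a = -b`, Leibniz gives `ε ∘ ad a = ad a ∘ ε - ad b`, so
`ε (ad(a)^(k+1) Y)` is minus the sum of the `k + 1` terms `ad(a)^i ad(b) ad(a)^(k-i) Y`.
Modulo `[[L,L],[L,L]]`, `ad a` and `ad b` commute on `[L,L]`, their commutator being
`ad [a,b]` with `[a,b] ∈ [L,L]`; hence each term is `ad(a)^k ad(b) Y`. -/

section

variable {R 𝔤 : Type*} [CommRing R] [LieRing 𝔤] [LieAlgebra R 𝔤]

lemma LieAlgebra.ad_pow_succ_apply (x y : 𝔤) (n : ℕ) :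
    (ad R 𝔤 x ^ (n + 1)) y = ⁅x, (ad R 𝔤 x ^ n) y⁆ := by
  rw [pow_succ', Module.End.mul_apply, ad_apply]

lemma LieIdeal.ad_pow_apply_mem (I : LieIdeal R 𝔤) (x : 𝔤) (k : ℕ) {z : 𝔤} (hz : z ∈ I) :
    (LieAlgebra.ad R 𝔤 x ^ k) z ∈ I := by
  rw [Module.End.coe_pow]
  exact Set.MapsTo.iterate (fun _ hm ↦ I.lie_mem hm) k hz

lemma LieIdeal.lie_ad_pow_sub_ad_pow_lie_mem (I : LieIdeal R 𝔤) {x y : 𝔤} (hxy : ⁅x, y⁆ ∈ I)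
    (k : ℕ) {z : 𝔤} (hz : z ∈ I) :
    ⁅y, (LieAlgebra.ad R 𝔤 x ^ k) z⁆ - (LieAlgebra.ad R 𝔤 x ^ k) ⁅y, z⁆ ∈ ⁅I, I⁆ := by
  induction k with
  | zero => simp
  | succ k ih =>
    set w := (LieAlgebra.ad R 𝔤 x ^ k) z
    have hyx : ⁅y, x⁆ ∈ I := by
      rw [← lie_skew]
      exact I.neg_mem hxy
    have key : ⁅y, (LieAlgebra.ad R 𝔤 x ^ (k + 1)) z⁆ - (LieAlgebra.ad R 𝔤 x ^ (k + 1)) ⁅y, z⁆ =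
        ⁅⁅y, x⁆, w⁆ + ⁅x, ⁅y, w⁆ - (LieAlgebra.ad R 𝔤 x ^ k) ⁅y, z⁆⁆ := by
      rw [LieAlgebra.ad_pow_succ_apply, LieAlgebra.ad_pow_succ_apply, leibniz_lie y x w, lie_sub]
      abel
    rw [key]
    exact add_mem (LieSubmodule.lie_mem_lie hyx (I.ad_pow_apply_mem x k hz)) (⁅I, I⁆.lie_mem ih)

lemma LieDerivation.apply_ad_pow_of_apply_eq_zero (D : LieDerivation R 𝔤 𝔤) {x : 𝔤}
    (hx : D x = 0) (k : ℕ) (y : 𝔤) :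
    D ((LieAlgebra.ad R 𝔤 x ^ k) y) = (LieAlgebra.ad R 𝔤 x ^ k) (D y) := by
  induction k with
  | zero => rfl
  | succ k ih =>
    rw [LieAlgebra.ad_pow_succ_apply, LieAlgebra.ad_pow_succ_apply, D.apply_lie_eq_add, ih, hx,
      zero_lie, add_zero]

lemma LieDerivation.apply_ad_pow_succ_sub_smul_mem (D : LieDerivation R 𝔤 𝔤) (I : LieIdeal R 𝔤)
    {a Y : 𝔤} (ha : ⁅a, D a⁆ ∈ I) (hY : Y ∈ I) (hDY : D Y = 0) (k : ℕ) :
    D ((LieAlgebra.ad R 𝔤 a ^ (k + 1)) Y) -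
      ((k : R) + 1) • (LieAlgebra.ad R 𝔤 a ^ k) ⁅D a, Y⁆ ∈ ⁅I, I⁆ := by
  induction k with
  | zero => simp [D.apply_lie_eq_add, hDY]
  | succ k ih =>
    set w := (LieAlgebra.ad R 𝔤 a ^ (k + 1)) Y
    have key : D ((LieAlgebra.ad R 𝔤 a ^ (k + 1 + 1)) Y) -
          ((↑(k + 1) : R) + 1) • (LieAlgebra.ad R 𝔤 a ^ (k + 1)) ⁅D a, Y⁆ =
        ⁅a, D w - ((k : R) + 1) • (LieAlgebra.ad R 𝔤 a ^ k) ⁅D a, Y⁆⁆ +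
          (⁅D a, w⁆ - (LieAlgebra.ad R 𝔤 a ^ (k + 1)) ⁅D a, Y⁆) := by
      rw [LieAlgebra.ad_pow_succ_apply _ _ (k + 1), D.apply_lie_eq_add, lie_sub, lie_smul,
        ← LieAlgebra.ad_pow_succ_apply]
      push_cast
      module
    rw [key]
    exact add_mem (⁅I, I⁆.lie_mem ih) (I.lie_ad_pow_sub_ad_pow_lie_mem ha (k + 1) hY)

end

lemma lie_mem_D1 (x y : L) : ⁅x, y⁆ ∈ D1 :=
  LieSubmodule.lie_mem_lie (LieSubmodule.mem_top x) (LieSubmodule.mem_top y)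

/-- The derivation `ε₀` of `L = Lie(a,b)` determined by `ε₀(a) = -b`, `ε₀(b) = 0` satisfies
`ε₀([a,b]) = 0` and induces on the meta-abelian layer `[L,L]/[[L,L],[L,L]] ≅ ℚ[U,V]`
(via `ad(a)^k ad(b)^l([a,b]) ↦ U^k V^l`) the derivation `-V ∂/∂U`:
`ε₀(ad(a)^k ad(b)^l([a,b])) ≡ -k · ad(a)^{k-1} ad(b)^{l+1}([a,b])` mod `[[L,L],[L,L]]`. -/
theorem epsilon_zero_acts_as_minus_V_dU (ε : LieDerivation ℚ L L)
    (hεa : ε ga = -gb) (hεb : ε gb = 0) :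
    ε ⁅ga, gb⁆ = 0 ∧
    (∀ l : ℕ, ε (adp gb l ⁅ga, gb⁆) ∈ D2) ∧
    (∀ k l : ℕ,
      ε (adp ga (k + 1) (adp gb l ⁅ga, gb⁆)) +
        ((k : ℚ) + 1) • adp ga k (adp gb (l + 1) ⁅ga, gb⁆) ∈ D2) := by
  have hab : ε ⁅ga, gb⁆ = 0 := by simp [ε.apply_lie_eq_add, hεa, hεb]
  have hbl (l : ℕ) : ε (adp gb l ⁅ga, gb⁆) = 0 := by
    rw [adp, ε.apply_ad_pow_of_apply_eq_zero hεb, hab, map_zero]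
  refine ⟨hab, fun l ↦ hbl l ▸ D2.zero_mem, fun k l ↦ ?_⟩
  have h := ε.apply_ad_pow_succ_sub_smul_mem D1 (lie_mem_D1 ga (ε ga))
    (D1.ad_pow_apply_mem gb l (lie_mem_D1 ga gb)) (hbl l) k
  rw [hεa, neg_lie, map_neg, smul_neg, sub_neg_eq_add] at h
  simp only [adp]
  rwa [LieAlgebra.ad_pow_succ_apply gb]
end
end

section
/- A composition ε_{2k_1} ∘ ⋯ ∘ ε_{2k_n} of the derivations ε_{2k} (k ≥ 0) acts nontrivially on the meta-abelian quotient L/[[L,L],[L,L]] of the free Lie algebra L = Lie(a,b) only if the multi-index has the form (0,…,0,2k_n) or (0,…,0,2k_{n-1},0). -/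
/-!
Every derivation of `L` preserves `D¹ = [L,L]` and `D² = [D¹,D¹]`. Modulo `D¹`, `ε₀` sends `a` to
`-b` and `b` to `0`, while each Tsunogai derivation `ε_{2k}`, `k ≥ 1`, vanishes; hence any two of
the `ε`'s compose to a map `L → D¹`. A Tsunogai derivation also kills `[a,b]` (its defining sum
telescopes), and `D¹` is the ideal generated by `[a,b]`, so it maps `D¹` into `D²`. The composition
therefore lands in `D²` as soon as a Tsunogai derivation is applied after another one, or after
any two of the `ε`'s.
-/

noncomputable section

open Set

-- `V k` bounds the image of the partial composition `f k ∘ ⋯ ∘ f (n - 1)`.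
theorem Fin.mapsTo_foldr {α : Type*} {n : ℕ} (f : Fin n → α → α) (V : ℕ → Set α)
    (hf : ∀ k : Fin n, MapsTo (f k) (V (k + 1)) (V k)) : MapsTo (Fin.foldr n f) (V n) (V 0) := by
  induction n generalizing V with
  | zero => exact mapsTo_id _
  | succ n ih =>
    intro x hx
    rw [Fin.foldr_succ]
    exact hf 0 (ih (fun k => f k.succ) (fun k => V (k + 1)) (fun k => hf k.succ) hx)

theorem Fin.foldr_mem_of_lt {α : Type*} {n : ℕ} (f : Fin n → α → α) {S T : Set α}
    (hS : ∀ k, MapsTo (f k) S S) (hT : ∀ k, MapsTo (f k) T T) {i j : Fin n} (hij : i < j)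
    (hi : MapsTo (f i) S T) (hj : ∀ x, f j x ∈ S) (x : α) : Fin.foldr n f x ∈ T := by
  let V : ℕ → Set α := fun k => if k ≤ i then T else if k ≤ j then S else univ
  have hxV : x ∈ V n := by
    simp only [V, if_neg (Nat.not_le.2 i.isLt), if_neg (Nat.not_le.2 j.isLt), mem_univ]
  refine Fin.mapsTo_foldr f V (fun k => ?_) hxV
  have hij' : (i : ℕ) < j := hij
  simp only [V]
  split_ifs
  all_goals first
    | exact hT k | exact hS k | exact mapsTo_univ _ _
    | (obtain rfl : k = i := Fin.ext (by omega)); exact hi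
    | (obtain rfl : k = j := Fin.ext (by omega)); exact fun y _ => hj y
    | omega

theorem Fin.foldr_mem_of_add_two_lt {α : Type*} {n : ℕ} (f : Fin n → α → α) {R S T : Set α}
    (hR : ∀ k x, f k x ∈ R) (hRS : ∀ k, MapsTo (f k) R S) (hT : ∀ k, MapsTo (f k) T T)
    {i : Fin n} (hin : (i : ℕ) + 2 < n) (hi : MapsTo (f i) S T) (x : α) :
    Fin.foldr n f x ∈ T := by
  let V : ℕ → Set α := fun k =>
    if k ≤ i then T else if k = i + 1 then S else if k = i + 2 then R else univ
  have hxV : x ∈ V n := by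
    simp only [V, if_neg (show ¬n ≤ i by omega), if_neg (show n ≠ i + 1 by omega),
      if_neg (show n ≠ i + 2 by omega), mem_univ]
  refine Fin.mapsTo_foldr f V (fun k => ?_) hxV
  simp only [V]
  split_ifs
  all_goals first
    | exact hT k | exact hRS k | exact fun y _ => hR k y | exact mapsTo_univ _ _
    | (obtain rfl : k = i := Fin.ext (by omega)); exact hi
    | omega

theorem Submodule.mapsTo_sup_span_singleton {R V : Type*} [Semiring R] [AddCommMonoid V]
    [Module R V] (f : V →ₗ[R] V) {N : Submodule R V} {b : V} (hN : MapsTo f N N) (hb : f b ∈ N) :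
    MapsTo f (N ⊔ span R {b} : Submodule R V) N := by
  have : N ⊔ span R {b} ≤ N.comap f :=
    sup_le (fun _ hx => hN hx) (span_le.2 (singleton_subset_iff.2 hb))
  exact fun _ hx => this hx

section LieAlgebra

variable {R 𝔤 : Type*} [CommRing R] [LieRing 𝔤] [LieAlgebra R 𝔤]

theorem FreeLieAlgebra.lieSpan_range_of {X : Type*} :
    LieSubalgebra.lieSpan R (FreeLieAlgebra R X) (range (of R)) = ⊤ := by
  set K := LieSubalgebra.lieSpan R (FreeLieAlgebra R X) (range (of R))
  let F : FreeLieAlgebra R X →ₗ⁅R⁆ K :=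
    lift R fun x => ⟨of R x, LieSubalgebra.subset_lieSpan (mem_range_self x)⟩
  have hF : K.incl.comp F = LieHom.id := hom_ext fun x => by simp [F]
  refine eq_top_iff.2 fun y _ => ?_
  have hy : K.incl (F y) = y := congr($hF y)
  exact hy ▸ (F y).2

theorem LieDerivation.mapsTo_lie (d : LieDerivation R 𝔤 𝔤) {I J : LieIdeal R 𝔤}
    (hI : MapsTo d I I) (hJ : MapsTo d J J) :
    MapsTo d (⁅I, J⁆ : LieIdeal R 𝔤) (⁅I, J⁆ : LieIdeal R 𝔤) := by
  intro x hx
  rw [SetLike.mem_coe, ← LieSubmodule.mem_toSubmodule,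
    LieSubmodule.lieIdeal_oper_eq_linear_span] at hx
  induction hx using Submodule.span_induction with
  | mem x hx =>
    obtain ⟨⟨u, hu⟩, ⟨v, hv⟩, rfl⟩ := hx
    rw [SetLike.mem_coe, LieDerivation.apply_lie_eq_add]
    exact add_mem (LieSubmodule.lie_mem_lie hu (hJ hv)) (LieSubmodule.lie_mem_lie (hI hu) hv)
  | zero => simp
  | add x y _ _ hx hy => simpa using add_mem hx hy
  | smul c x _ hx => simpa using Submodule.smul_mem _ c hx

theorem top_lie_top_le_of_lieSpan_eq_top {s : Set 𝔤} (hs : LieSubalgebra.lieSpan R 𝔤 s = ⊤)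
    {J : LieIdeal R 𝔤} (h : ∀ x ∈ s, ∀ y ∈ s, ⁅x, y⁆ ∈ J) : ⁅(⊤ : LieIdeal R 𝔤), ⊤⁆ ≤ J := by
  have key : ∀ x : 𝔤, (∀ y ∈ s, ⁅x, y⁆ ∈ J) → ∀ y, ⁅x, y⁆ ∈ J := by
    intro x hx y
    induction (hs ▸ trivial : y ∈ LieSubalgebra.lieSpan R 𝔤 s) using
      LieSubalgebra.lieSpan_induction with
    | mem y hy => exact hx y hy
    | zero => simp
    | add y z _ _ hy hz => simpa using add_mem hy hz
    | smul c y _ hy => simpa using J.smul_mem c hy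
    | lie y z _ _ hy hz =>
      rw [leibniz_lie]
      exact add_mem (lie_mem_left R 𝔤 J _ _ hy) (J.lie_mem hz)
  refine (LieSubmodule.lie_le_iff _ _ _).2 fun x _ y _ => key x (fun z hz => ?_) y
  rw [← lie_skew]
  exact neg_mem (key z (h z hz) x)

theorem LieDerivation.apply_mem_of_lieSpan_eq_top {s : Set 𝔤}
    (hs : LieSubalgebra.lieSpan R 𝔤 s = ⊤) (d : LieDerivation R 𝔤 𝔤) {N : Submodule R 𝔤}
    (hN : (⁅(⊤ : LieIdeal R 𝔤), ⊤⁆ : LieIdeal R 𝔤).toSubmodule ≤ N) (hsN : ∀ x ∈ s, d x ∈ N)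
    (x : 𝔤) : d x ∈ N := by
  induction (hs ▸ trivial : x ∈ LieSubalgebra.lieSpan R 𝔤 s) using
    LieSubalgebra.lieSpan_induction with
  | mem x hx => exact hsN x hx
  | zero => simp
  | add x y _ _ hx hy => simpa using add_mem hx hy
  | smul c x _ hx => simpa using N.smul_mem c hx
  | lie x y _ _ _ _ =>
    apply hN
    rw [LieSubmodule.mem_toSubmodule, LieDerivation.apply_lie_eq_add]
    exact add_mem (LieSubmodule.lie_mem_lie trivial trivial)
      (LieSubmodule.lie_mem_lie trivial trivial)

theorem LieDerivation.mapsTo_top_lie_top {a b : 𝔤} (hs : LieSubalgebra.lieSpan R 𝔤 {a, b} = ⊤)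
    (d : LieDerivation R 𝔤 𝔤) {I : LieIdeal R 𝔤} (hd : ∀ x, d x ∈ I) (hab : ⁅a, b⁆ ∈ I)
    (hdab : d ⁅a, b⁆ ∈ ⁅I, I⁆) :
    MapsTo d (⁅(⊤ : LieIdeal R 𝔤), ⊤⁆ : LieIdeal R 𝔤) (⁅I, I⁆ : LieIdeal R 𝔤) := by
  let K : LieIdeal R 𝔤 :=
    { carrier := {x | x ∈ I ∧ d x ∈ ⁅I, I⁆}
      add_mem' := fun hx hy => ⟨add_mem hx.1 hy.1, by simpa using add_mem hx.2 hy.2⟩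
      zero_mem' := ⟨zero_mem _, by simp⟩
      smul_mem' := fun c _ hx => ⟨I.smul_mem c hx.1, by simpa using Submodule.smul_mem _ c hx.2⟩
      lie_mem := fun {z _} hx => ⟨I.lie_mem hx.1, by
        rw [LieDerivation.apply_lie_eq_add]
        exact add_mem (LieSubmodule.lie_mem _ hx.2) (LieSubmodule.lie_mem_lie (hd z) hx.1)⟩ }
  have habK : ⁅a, b⁆ ∈ K := ⟨hab, hdab⟩
  have hK : ⁅(⊤ : LieIdeal R 𝔤), ⊤⁆ ≤ K := top_lie_top_le_of_lieSpan_eq_top hs <| by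
    rintro x (rfl | rfl) y (rfl | rfl)
    · simp
    · exact habK
    · rw [← lie_skew]
      exact neg_mem habK
    · simp
  exact fun x hx => (hK hx).2

end LieAlgebra

section FreeLieAlgebraOnTwoGenerators

theorem lieSpan_ga_gb : LieSubalgebra.lieSpan ℚ L {ga, gb} = ⊤ := by
  rw [← FreeLieAlgebra.lieSpan_range_of]
  congr 1
  ext x
  simp [ga, gb, or_comm]

theorem adp_succ (x : L) (j : ℕ) (y : L) : adp x (j + 1) y = ⁅x, adp x j y⁆ := by
  rw [adp, adp, pow_succ', Module.End.mul_apply, LieAlgebra.ad_apply]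

theorem lie_sum_alternating_adp (x y : L) (m : ℕ) :
    ⁅x, ∑ j ∈ Finset.range m, (-1 : ℚ) ^ j • ⁅adp x j y, adp x (2 * m - 1 - j) y⁆⁆ =
      ⁅y, adp x (2 * m) y⁆ := by
  set f : ℕ → L := fun j => (-1 : ℚ) ^ j • ⁅adp x j y, adp x (2 * m - j) y⁆
  have hterm : ∀ j ∈ Finset.range m,
      ⁅x, (-1 : ℚ) ^ j • ⁅adp x j y, adp x (2 * m - 1 - j) y⁆⁆ = f j - f (j + 1) := by
    intro j hj
    have e1 : 2 * m - j = 2 * m - 1 - j + 1 := by have := Finset.mem_range.1 hj; omega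
    have e2 : 2 * m - (j + 1) = 2 * m - 1 - j := by omega
    simp only [f, e1, e2, lie_smul, leibniz_lie, ← adp_succ, pow_succ, mul_neg_one, neg_smul,
      sub_neg_eq_add, smul_add]
    abel
  have hfm : f m = 0 := by simp [f, show 2 * m - m = m by omega]
  have hf0 : f 0 = ⁅y, adp x (2 * m) y⁆ := by simp [f, adp]
  rw [lie_sum, Finset.sum_congr rfl hterm, Finset.sum_range_sub', hfm, hf0, sub_zero]

def IsTsunogai (m : ℕ) (d : LieDerivation ℚ L L) : Prop :=
  d ga = (2 / (Nat.factorial (2 * m - 2) : ℚ)) • adp ga (2 * m) gb ∧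
    d gb = (2 / (Nat.factorial (2 * m - 2) : ℚ)) •
      ∑ j ∈ Finset.range m, ((-1 : ℚ)) ^ j • ⁅adp ga j gb, adp ga (2 * m - 1 - j) gb⁆

namespace IsTsunogai

variable {m : ℕ} {d : LieDerivation ℚ L L}

theorem apply_lie_ga_gb (h : IsTsunogai m d) : d ⁅ga, gb⁆ = 0 := by
  rw [LieDerivation.apply_lie_eq_add, h.1, h.2, lie_smul, lie_sum_alternating_adp, smul_lie,
    ← lie_skew gb, smul_neg, neg_add_cancel]

theorem apply_mem_D1 (h : IsTsunogai m d) (hm : 0 < m) (x : L) : d x ∈ D1 := by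
  refine d.apply_mem_of_lieSpan_eq_top lieSpan_ga_gb le_rfl ?_ x
  rintro _ (rfl | rfl)
  · rw [h.1, show 2 * m = 2 * m - 1 + 1 by omega, adp_succ]
    exact Submodule.smul_mem _ _ (LieSubmodule.lie_mem_lie trivial trivial)
  · rw [h.2]
    exact Submodule.smul_mem _ _ (sum_mem fun j _ =>
      Submodule.smul_mem _ _ (LieSubmodule.lie_mem_lie trivial trivial))

theorem mapsTo_D1_D2 (h : IsTsunogai m d) (hm : 0 < m) : MapsTo d D1 D2 :=
  d.mapsTo_top_lie_top lieSpan_ga_gb (h.apply_mem_D1 hm)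
    (LieSubmodule.lie_mem_lie trivial trivial) (by rw [h.apply_lie_ga_gb]; exact zero_mem _)

end IsTsunogai

def D1b : Submodule ℚ L := D1.toSubmodule ⊔ Submodule.span ℚ {gb}

theorem LieDerivation.mapsTo_D1 (d : LieDerivation ℚ L L) : MapsTo d D1 D1 :=
  d.mapsTo_lie (mapsTo_univ _ _) (mapsTo_univ _ _)

theorem LieDerivation.mapsTo_D2 (d : LieDerivation ℚ L L) : MapsTo d D2 D2 :=
  d.mapsTo_lie d.mapsTo_D1 d.mapsTo_D1

theorem LieDerivation.apply_mem_D1b (d : LieDerivation ℚ L L) (ha : d ga ∈ D1b)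
    (hb : d gb ∈ D1) (x : L) : d x ∈ D1b :=
  d.apply_mem_of_lieSpan_eq_top lieSpan_ga_gb le_sup_left
    (by rintro _ (rfl | rfl); exacts [ha, Submodule.mem_sup_left hb]) x

theorem LieDerivation.mapsTo_D1b_D1 (d : LieDerivation ℚ L L) (hb : d gb ∈ D1) :
    MapsTo d D1b D1 :=
  Submodule.mapsTo_sup_span_singleton (d : L →ₗ[ℚ] L) d.mapsTo_D1 hb

end FreeLieAlgebraOnTwoGenerators

theorem eq_zero_except_last_or_except_second_last {n : ℕ} (k : Fin n → ℕ)
    (hlate : ∀ i : Fin n, 0 < k i → n ≤ i + 2)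
    (hsingle : ∀ i j : Fin n, i < j → 0 < k i → k j = 0) :
    (∀ i : Fin n, (i : ℕ) < n - 1 → k i = 0) ∨
      ((∀ i : Fin n, (i : ℕ) < n - 1 → (i : ℕ) ≠ n - 2 → k i = 0) ∧
        (∀ i : Fin n, (i : ℕ) = n - 1 → k i = 0)) := by
  by_cases hlast : ∀ i : Fin n, (i : ℕ) < n - 1 → k i = 0
  · exact .inl hlast
  push Not at hlast
  obtain ⟨i, hin, hi⟩ := hlast
  refine .inr ⟨fun i' hi'n hi' => ?_, fun j hj => hsingle i j (Fin.lt_def.2 (by omega)) (by omega)⟩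
  by_contra hi'
  have := hlate i' (Nat.pos_of_ne_zero hi')
  omega

/-- A composition `ε_{2k₁} ∘ ⋯ ∘ ε_{2kₙ}` of the derivations `ε_{2k}` (with `ε₀(a) = -b`,
`ε₀(b) = 0`, and for `k ≥ 1` the Tsunogai derivation) acts nontrivially on the meta-abelian
quotient `L/[[L,L],[L,L]]` only if the multi-index has the form `(0,…,0,2kₙ)` or
`(0,…,0,2k_{n-1},0)`. -/
theorem composition_nontrivial_only_for_special_indices (n : ℕ) (k : Fin n → ℕ)
    (ε : Fin n → LieDerivation ℚ L L)
    (h0 : ∀ i, k i = 0 → (ε i) ga = -gb ∧ (ε i) gb = 0)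
    (h1 : ∀ i, 0 < k i →
      (ε i) ga = (2 / (Nat.factorial (2 * k i - 2) : ℚ)) • adp ga (2 * k i) gb ∧
      (ε i) gb = (2 / (Nat.factorial (2 * k i - 2) : ℚ)) •
        ∑ j ∈ Finset.range (k i),
          ((-1 : ℚ)) ^ j • ⁅adp ga j gb, adp ga (2 * k i - 1 - j) gb⁆)
    (hnontriv : ∃ x : L, Fin.foldr n (fun i y => (ε i) y) x ∉ D2) :
    -- the multi-index is (0, …, 0, 2kₙ) …
    (∀ i : Fin n, (i : ℕ) < n - 1 → k i = 0) ∨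
    -- … or (0, …, 0, 2k_{n-1}, 0)
    ((∀ i : Fin n, (i : ℕ) < n - 1 → (i : ℕ) ≠ n - 2 → k i = 0) ∧
      (∀ i : Fin n, (i : ℕ) = n - 1 → k i = 0)) := by
  obtain ⟨x, hx⟩ := hnontriv
  have hgen (i) : ε i ga ∈ D1b ∧ ε i gb ∈ D1 := by
    rcases (k i).eq_zero_or_pos with hi | hi
    · rw [(h0 i hi).1, (h0 i hi).2]
      exact ⟨neg_mem (Submodule.mem_sup_right (Submodule.mem_span_singleton_self gb)), zero_mem _⟩
    · exact ⟨Submodule.mem_sup_left (IsTsunogai.apply_mem_D1 (h1 i hi) hi ga),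
        IsTsunogai.apply_mem_D1 (h1 i hi) hi gb⟩
  refine eq_zero_except_last_or_except_second_last k (fun i hi => ?_) (fun i j hij hi => ?_)
  · by_contra! hin
    exact hx (Fin.foldr_mem_of_add_two_lt _ (fun i => (ε i).apply_mem_D1b (hgen i).1 (hgen i).2)
      (fun i => (ε i).mapsTo_D1b_D1 (hgen i).2) (fun i => (ε i).mapsTo_D2) hin
      (IsTsunogai.mapsTo_D1_D2 (h1 i hi) hi) x)
  · by_contra hj
    have hj := Nat.pos_of_ne_zero hj
    exact hx (Fin.foldr_mem_of_lt _ (fun i => (ε i).mapsTo_D1) (fun i => (ε i).mapsTo_D2) hij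
      (IsTsunogai.mapsTo_D1_D2 (h1 i hi) hi) (IsTsunogai.apply_mem_D1 (h1 j hj) hj) x)
end
end
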